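/- Let Λ be a left and right noetherian ring and k a non-negative integer. If the small left finitistic dimension of Λ is at most k, then every finitely generated right Λ-module N with grade N ≥ k+1 is zero. -/

import Mathlib

open CategoryTheory
open scoped DirectSum

noncomputable section

variable (R : Type) [Ring R]

/-- The evaluation map from a module to its double dual. -/
def evalDD (M : Type) [AddCommGroup M] [Module R M] :
    M →ₗ[R] ((M →ₗ[R] R) →ₗ[Rᵐᵒᵖ] R) where
  toFun x :=
    { toFun := fun f => f x
      map_add' := fun f g => rfl
      map_smul' := fun r f => rfl }
  map_add' x y := by ext f; simp
  map_smul' a x := by ext f; simp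

variable {R} in
/-- The dual of a linear map between left modules, as a map of right modules. -/
def dualMap {M N : Type} [AddCommGroup M] [Module R M] [AddCommGroup N] [Module R N]
    (f : M →ₗ[R] N) : (N →ₗ[R] R) →ₗ[Rᵐᵒᵖ] (M →ₗ[R] R) where
  toFun g := g.comp f
  map_add' g h := by ext; simp
  map_smul' r g := by ext; simp

/-- The contravariant duality functor `Hom_R(-, R)` from left `R`-modules to right `R`-modules. -/
def dualFunctor : ModuleCat.{0} R ⥤ (ModuleCat.{0} Rᵐᵒᵖ)ᵒᵖ where
  obj M := Opposite.op (ModuleCat.of Rᵐᵒᵖ (M →ₗ[R] R))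
  map f := (ModuleCat.ofHom (dualMap f.hom)).op
  map_id M := by
    apply Quiver.Hom.unop_inj
    ext g
    rfl
  map_comp f g := by
    apply Quiver.Hom.unop_inj
    ext h
    rfl

instance : (dualFunctor R).Additive where
  map_add {M N f g} := by
    apply Quiver.Hom.unop_inj
    rw [unop_add]
    show ModuleCat.ofHom (dualMap (f + g).hom) = ModuleCat.ofHom (dualMap f.hom) + ModuleCat.ofHom (dualMap g.hom)
    ext h x
    show h ((f + g).hom x) = h (f.hom x) + h (g.hom x)
    rw [ModuleCat.hom_add, LinearMap.add_apply, map_add]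

/-- `Ext^n_R(M, R)` as a right `R`-module, computed from a projective resolution of `M`. -/
def extMod (n : ℕ) (M : ModuleCat.{0} R) : ModuleCat.{0} Rᵐᵒᵖ :=
  ((((dualFunctor R).mapHomologicalComplex _).obj
    (ProjectiveResolution.of M).complex).unop).homology n

/-- Vanishing of `Ext^n_R(M, R)`. -/
def extVanish (n : ℕ) (M : Type) [AddCommGroup M] [Module R M] : Prop :=
  Subsingleton (extMod R n (ModuleCat.of R M))

/-- `grade M ≥ t` : `Ext^i_R(M, R) = 0` for all `i < t`. -/
def gradeGE (M : Type) [AddCommGroup M] [Module R M] (t : ℕ) : Prop :=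
  ∀ i, i < t → extVanish R i M

/-- `grade M = k`. -/
def gradeEq (M : Type) [AddCommGroup M] [Module R M] (k : ℕ) : Prop :=
  gradeGE R M k ∧ ¬ extVanish R k M

/-- `grade M = ∞` : all `Ext^i_R(M, R)` vanish. -/
def gradeInf (M : Type) [AddCommGroup M] [Module R M] : Prop :=
  ∀ i, extVanish R i M

/-- `s.grade M ≥ t` : every non-zero submodule has grade at least `t`. -/
def sgradeGE (M : Type) [AddCommGroup M] [Module R M] (t : ℕ) : Prop :=
  ∀ A : Submodule R M, A ≠ ⊥ → gradeGE R A t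

/-- `M` is pure of grade `k` : `M` is non-zero and every non-zero submodule has grade
exactly `k`. -/
def pureGrade (M : Type) [AddCommGroup M] [Module R M] (k : ℕ) : Prop :=
  Nontrivial M ∧ ∀ A : Submodule R M, A ≠ ⊥ → gradeEq R A k

/-- The character module `Hom_ℤ(M, ℚ/ℤ)` of a module. -/
abbrev CharMod (M : Type) [AddCommGroup M] : Type := M →+ AddCircle (1 : ℚ)

/-- The right `R`-module structure on the character module of a left `R`-module. -/
instance (M : Type) [AddCommGroup M] [Module R M] : Module Rᵐᵒᵖ (CharMod M) where
  smul r f := (f : M →+ AddCircle (1 : ℚ)).comp (DistribSMul.toAddMonoidHom M r.unop)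
  one_smul f := by
    refine AddMonoidHom.ext fun x => ?_
    show f ((1 : R) • x) = f x
    rw [one_smul]
  mul_smul r s f := by
    refine AddMonoidHom.ext fun x => ?_
    show f ((s.unop * r.unop) • x) = f (s.unop • r.unop • x)
    rw [mul_smul]
  smul_zero r := by
    refine AddMonoidHom.ext fun x => ?_
    show (0 : M →+ AddCircle (1 : ℚ)) (r.unop • x) = 0
    rfl
  smul_add r f g := by
    refine AddMonoidHom.ext fun x => ?_
    show (f + g : M →+ AddCircle (1 : ℚ)) (r.unop • x) = f (r.unop • x) + g (r.unop • x)
    rfl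
  add_smul r s f := by
    refine AddMonoidHom.ext fun x => ?_
    show f ((r.unop + s.unop) • x) = f (r.unop • x) + f (s.unop • x)
    rw [add_smul, map_add]
  zero_smul f := by
    refine AddMonoidHom.ext fun x => ?_
    show f ((0 : R) • x) = 0
    rw [zero_smul, map_zero]

/-- A left `R`-module is flat iff its character module is an injective right `R`-module
(Lambek's characterization, here taken as the definition valid over noncommutative rings). -/
def IsFlatMod (M : Type) [AddCommGroup M] [Module R M] : Prop :=
  Module.Injective Rᵐᵒᵖ (CharMod M)

/-- The flat dimension of `M` is at most `n` : there is a flat resolution of `M`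
concentrated in degrees `≤ n`. -/
def flatDimLE (M : ModuleCat.{0} R) (n : ℕ) : Prop :=
  ∃ (F : ChainComplex (ModuleCat.{0} R) ℕ) (π : F ⟶ (ChainComplex.single₀ _).obj M),
    (∀ i, IsFlatMod R (F.X i)) ∧ (∀ i, n < i → Subsingleton (F.X i)) ∧ QuasiIso π

/-- The projective dimension of `M` is at most `n`. -/
def projDimLE (M : ModuleCat.{0} R) (n : ℕ) : Prop :=
  ∃ (F : ChainComplex (ModuleCat.{0} R) ℕ) (π : F ⟶ (ChainComplex.single₀ _).obj M),
    (∀ i, Projective (F.X i)) ∧ (∀ i, n < i → Subsingleton (F.X i)) ∧ QuasiIso π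

/-- The injective dimension of `M` is at most `n` : there is an injective resolution of `M`
concentrated in degrees `≤ n`. -/
def injDimLE (M : ModuleCat.{0} R) (n : ℕ) : Prop :=
  ∃ (F : CochainComplex (ModuleCat.{0} R) ℕ) (ι : (CochainComplex.single₀ _).obj M ⟶ F),
    (∀ i, Injective (F.X i)) ∧ (∀ i, n < i → Subsingleton (F.X i)) ∧ QuasiIso ι

/-- The injective dimension of `M` is exactly `n`. -/
def injDimEq (M : ModuleCat.{0} R) (n : ℕ) : Prop :=
  injDimLE R M n ∧ ∀ m, injDimLE R M m → n ≤ m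

/-- The small (left) finitistic dimension of `R` is at most `k`. -/
def finDimLE (k : ℕ) : Prop :=
  ∀ M : ModuleCat.{0} R, Module.Finite R M → (∃ n, projDimLE R M n) → projDimLE R M k

/-- The small (left) finitistic dimension of `R` is exactly `k`. -/
def finDimEq (k : ℕ) : Prop :=
  finDimLE R k ∧ ∀ m, finDimLE R m → k ≤ m

/-- A minimal injective resolution `0 → R → I 0 → I 1 → ⋯` of `R` as a module over itself. -/
structure MinInjRes where
  I : ℕ → Type
  acg : ∀ n, AddCommGroup (I n)
  mod : ∀ n, Module R (I n)
  ι : R →ₗ[R] I 0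
  d : ∀ n, I n →ₗ[R] I (n + 1)
  injective : ∀ n, Module.Injective R (I n)
  mono : Function.Injective ι
  exact0 : Function.Exact ι (d 0)
  exact : ∀ n, Function.Exact (d n) (d (n + 1))
  /-- Minimality: the kernel of each differential is an essential submodule. -/
  essential : ∀ n (K : Submodule R (I n)), K ⊓ LinearMap.ker (d n) = ⊥ → K = ⊥

attribute [instance] MinInjRes.acg MinInjRes.mod

/-- The socle (largest semisimple submodule) of a module is non-zero, i.e. the module
contains a simple submodule. -/
def socleNeZero (M : Type) [AddCommGroup M] [Module R M] : Prop :=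
  ∃ S : Submodule R M, IsSimpleModule R S

variable {R} in
/-- The transpose of a module with projective presentation `P₁ —f→ P₀ → M → 0` :
the cokernel of the dualized map `P₀* → P₁*`, a right `R`-module. -/
abbrev transposeOf {P1 P0 : Type} [AddCommGroup P1] [Module R P1] [AddCommGroup P0] [Module R P0]
    (f : P1 →ₗ[R] P0) : Type :=
  (P1 →ₗ[R] R) ⧸ LinearMap.range (dualMap f)

/-- `M` is a `k`-torsionfree module : for every finite projective presentation of `M`,
the transpose `X` satisfies `Ext^i(X, R) = 0` for `1 ≤ i ≤ k`. -/
def isTorsionfree (k : ℕ) (M : Type) [AddCommGroup M] [Module R M] : Prop :=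
  ∀ (P1 P0 : ModuleCat.{0} R), Projective P1 → Module.Finite R P1 →
    Projective P0 → Module.Finite R P0 →
    ∀ (f : P1 →ₗ[R] P0) (g : P0 →ₗ[R] M), Function.Surjective g → Function.Exact f g →
      ∀ i, 1 ≤ i → i ≤ k → extVanish Rᵐᵒᵖ i (transposeOf f)

/-- `M` is a `k`-syzygy module : there is an exact sequence
`0 → M → Q₀ → ⋯ → Q_{k-1}` with all `Qᵢ` finitely generated projective. -/
def isSyzygy : (k : ℕ) → (M : Type) → [AddCommGroup M] → [Module R M] → Prop
  | 0, _M, _, _ => True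
  | (k + 1), M, _, _ => ∃ Q : ModuleCat.{0} R, Projective Q ∧ Module.Finite R Q ∧
      ∃ f : M →ₗ[R] Q, Function.Injective f ∧ isSyzygy k (Q ⧸ LinearMap.range f)

/-- The canonical ring homomorphism `R →+* Rᵐᵒᵖᵐᵒᵖ`. -/
def opOpHom : R →+* Rᵐᵒᵖᵐᵒᵖ where
  toFun a := MulOpposite.op (MulOpposite.op a)
  map_one' := rfl
  map_mul' _ _ := rfl
  map_zero' := rfl
  map_add' _ _ := rfl

/-- `Ext^n_R(N, R)` of a right `R`-module `N`, as a left `R`-module (restricting scalars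
along the canonical identification `R ≅ Rᵐᵒᵖᵐᵒᵖ`). -/
def extModL (n : ℕ) (N : ModuleCat.{0} Rᵐᵒᵖ) : Type := extMod Rᵐᵒᵖ n N

instance (n : ℕ) (N : ModuleCat.{0} Rᵐᵒᵖ) : AddCommGroup (extModL R n N) :=
  inferInstanceAs (AddCommGroup (extMod Rᵐᵒᵖ n N))

instance (n : ℕ) (N : ModuleCat.{0} Rᵐᵒᵖ) : Module R (extModL R n N) :=
  Module.compHom (extMod Rᵐᵒᵖ n N) (opOpHom R)

/-- A module is torsionless if the evaluation map into its double dual is injective. -/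
def Torsionless (M : Type) [AddCommGroup M] [Module R M] : Prop :=
  Function.Injective (evalDD R M)

/-- A non-zero module is uniform if each of its non-zero submodules is essential. -/
def IsUniform (M : Type) [AddCommGroup M] [Module R M] : Prop :=
  Nontrivial M ∧ ∀ A : Submodule R M, A ≠ ⊥ → ∀ B : Submodule R M, A ⊓ B = ⊥ → B = ⊥

/-- An indecomposable module: non-zero, and admitting no non-trivial direct sum
decomposition. -/
def IsIndecomposableMod (M : Type) [AddCommGroup M] [Module R M] : Prop :=
  Nontrivial M ∧ ∀ A B : Submodule R M, IsCompl A B → A = ⊥ ∨ B = ⊥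

/-- `N` embeds into a finite direct sum of copies of `E`. -/
def embedsInFinSum (N : Type) [AddCommGroup N] [Module R N]
    (E : Type) [AddCommGroup E] [Module R E] : Prop :=
  ∃ (n : ℕ) (φ : N →ₗ[R] (Fin n → E)), Function.Injective φ

end


noncomputable section Aux

open CategoryTheory Limits

/-- Transfer of exactness along equivalences. -/
lemma exact_conj {A B C A' B' C' : Type} [Zero C] [Zero C']
    (f : A → B) (g : B → C) (hfg : Function.Exact f g)
    (α : A' → A) (hα : Function.Surjective α) (β : B ≃ B')
    (γ : C → C') (hγ : ∀ c, γ c = 0 ↔ c = 0) :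
    Function.Exact (⇑β ∘ f ∘ α) (γ ∘ g ∘ ⇑β.symm) := by
  intro y
  constructor
  · intro hy
    have : g (β.symm y) = 0 := (hγ _).1 hy
    obtain ⟨a, ha⟩ := (hfg _).1 this
    obtain ⟨a', ha'⟩ := hα a
    exact ⟨a', by simp [Function.comp, ha', ha]⟩
  · rintro ⟨a', rfl⟩
    refine (hγ _).2 ?_
    simpa using (hfg (f (α a'))).2 ⟨α a', rfl⟩

/-- A complex which is exact in positive degrees, with `H₀` identified with `M` via a
surjection `φ`, is quasi-isomorphic to `single₀ M`. -/
lemma quasiIso_to_single₀ {R : Type} [Ring R] (C : ChainComplex (ModuleCat.{0} R) ℕ)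
    (M : ModuleCat.{0} R) (φ : C.X 0 ⟶ M) (hw : C.d 1 0 ≫ φ = 0)
    (hsurj : Function.Surjective φ)
    (hex0 : ∀ x, φ x = 0 → x ∈ LinearMap.range (C.d 1 0).hom)
    (hex : ∀ n : ℕ, Function.Exact ⇑(C.d (n+2) (n+1)) ⇑(C.d (n+1) n)) :
    QuasiIso ((ChainComplex.toSingle₀Equiv C M).symm ⟨φ, hw⟩) := by
  constructor
  intro n
  match n with
  | 0 =>
    rw [ChainComplex.quasiIsoAt₀_iff, ShortComplex.quasiIso_iff_of_zeros']
    rotate_left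
    · exact C.shape 0 0 (by simp)
    · rfl
    · rfl
    refine (ShortComplex.exact_and_epi_g_iff_of_iso
      (ShortComplex.isoMk (Iso.refl _) (Iso.refl _) (Iso.refl _)
        (by exact (Category.id_comp _).trans (Category.comp_id _).symm) (by exact (Category.id_comp _).trans (Category.comp_id _).symm))).2 ⟨?_, ?_⟩
    · rw [ShortComplex.moduleCat_exact_iff]
      intro x hx
      exact hex0 x hx
    · rw [ModuleCat.epi_iff_surjective]
      exact hsurj
  | (n+1) =>
    rw [quasiIsoAt_iff_exactAt' _ _ (ChainComplex.exactAt_succ_single_obj _ _)]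
    rw [HomologicalComplex.exactAt_iff' _ (n+2) (n+1) n (by simp) (by simp)]
    rw [ShortComplex.moduleCat_exact_iff]
    intro x hx
    exact (hex n x).1 hx

end Aux


/-- One step of a finite free resolution: a f.g. module together with a surjection
from a finite free module. -/
structure FResStep (R : Type) [Ring R] where
  K : Type
  [acg : AddCommGroup K]
  [mod : Module R K]
  [fin : Module.Finite R K]
  m : ℕ
  f : (Fin m → R) →ₗ[R] K
  surj : Function.Surjective f

attribute [instance] FResStep.acg FResStep.mod FResStep.fin

variable {R : Type} [Ring R]

/-- The next step of the resolution: surject onto the kernel. -/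
noncomputable def FResStep.next [IsNoetherianRing R] (s : FResStep R) : FResStep R := by
  haveI : Module.Finite R (LinearMap.ker s.f) :=
    Module.Finite.iff_fg.2 (IsNoetherian.noetherian _)
  exact { K := LinearMap.ker s.f
          m := (Module.Finite.exists_fin' R (LinearMap.ker s.f)).choose
          f := (Module.Finite.exists_fin' R (LinearMap.ker s.f)).choose_spec.choose
          surj := (Module.Finite.exists_fin' R (LinearMap.ker s.f)).choose_spec.choose_spec }

lemma FResStep.next_K [IsNoetherianRing R] (s : FResStep R) :
    (s.next).K = LinearMap.ker s.f := rfl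

/-- The tower of syzygies. -/
noncomputable def resTower [IsNoetherianRing R] (s0 : FResStep R) : ℕ → FResStep R
  | 0 => s0
  | (n+1) => (resTower s0 n).next

/-- Every finitely generated module over a noetherian ring has a resolution by
finitely generated free modules. -/
lemma exists_fres (R : Type) [Ring R] [IsNoetherianRing R] (M : Type) [AddCommGroup M]
    [Module R M] [Module.Finite R M] :
    ∃ (m : ℕ → ℕ) (d : ∀ n, (Fin (m (n+1)) → R) →ₗ[R] (Fin (m n) → R))
      (p : (Fin (m 0) → R) →ₗ[R] M),
      Function.Surjective p ∧ Function.Exact (d 0) p ∧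
        (∀ n, Function.Exact (d (n+1)) (d n)) := by
  obtain ⟨m0, f0, hf0⟩ := Module.Finite.exists_fin' R M
  let T : ℕ → FResStep R := resTower ⟨M, m0, f0, hf0⟩
  have hT : ∀ n, T (n+1) = (T n).next := fun n => rfl
  refine ⟨fun n => (T n).m,
    fun n => (LinearMap.ker (T n).f).subtype.comp ((T (n+1)).f), (T 0).f, (T 0).surj, ?_, ?_⟩
  · intro y
    constructor
    · intro hy
      obtain ⟨x, hx⟩ := (T 1).surj (⟨y, hy⟩ : LinearMap.ker (T 0).f)
      exact ⟨x, congrArg Subtype.val hx⟩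
    · rintro ⟨x, rfl⟩
      exact ((T 1).f x).2
  · intro n y
    constructor
    · intro hy
      have hy' : (T (n+1)).f y = 0 := Subtype.ext hy
      obtain ⟨x, hx⟩ := (T (n+2)).surj (⟨y, hy'⟩ : LinearMap.ker (T (n+1)).f)
      exact ⟨x, congrArg Subtype.val hx⟩
    · rintro ⟨x, rfl⟩
      have h2 := ((T (n+2)).f x).2
      exact congrArg Subtype.val h2


section BridgeA

open CategoryTheory Limits

/-- If `Ext^i(M,R)` vanishes for suitable `i`, the dual of any f.g. free resolution of `M`
is exact at the corresponding spots. -/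
lemma dual_exactness (R : Type) [Ring R] (M : Type) [AddCommGroup M] [Module R M]
    (m : ℕ → ℕ) (d : ∀ n, (Fin (m (n+1)) → R) →ₗ[R] (Fin (m n) → R))
    (p : (Fin (m 0) → R) →ₗ[R] M) (hsurj : Function.Surjective p)
    (hex0 : Function.Exact (d 0) p) (hex : ∀ n, Function.Exact (d (n+1)) (d n)) :
    (extVanish R 0 M → Function.Injective (dualMap (d 0))) ∧
    (∀ i, extVanish R (i+1) M → Function.Exact ⇑(dualMap (d i)) ⇑(dualMap (d (i+1)))) := by
  classical
  have sq : ∀ n, (ModuleCat.ofHom (d (n+1))) ≫ (ModuleCat.ofHom (d n)) = 0 := by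
    intro n
    exact ModuleCat.hom_ext (LinearMap.ext fun x => (hex n).apply_apply_eq_zero x)
  let CN : ChainComplex (ModuleCat.{0} R) ℕ :=
    ChainComplex.of (fun n => ModuleCat.of R (Fin (m n) → R)) (fun n => ModuleCat.ofHom (d n)) sq
  have hCd : ∀ j, CN.d (j+1) j = ModuleCat.ofHom (d j) := fun j =>
    ChainComplex.of_d (fun n => ModuleCat.of R (Fin (m n) → R)) (fun n => ModuleCat.ofHom (d n)) j
  have hw : CN.d 1 0 ≫ ModuleCat.ofHom p = 0 := by
    rw [hCd 0]
    exact ModuleCat.hom_ext (LinearMap.ext fun x => hex0.apply_apply_eq_zero x)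
  let π : CN ⟶ (ChainComplex.single₀ _).obj (ModuleCat.of R M) :=
    (ChainComplex.toSingle₀Equiv _ _).symm ⟨ModuleCat.ofHom p, hw⟩
  haveI hqis : QuasiIso π := by
    apply quasiIso_to_single₀
    · exact hsurj
    · intro x hx
      rw [hCd 0]
      exact (hex0 x).1 hx
    · intro n
      rw [hCd (n+1), hCd n]
      exact hex n
  haveI hproj : ∀ n, Projective (CN.X n) :=
    fun n => ModuleCat.projective_of_free (Pi.basisFun R (Fin (m n)))
  let PR : ProjectiveResolution (ModuleCat.of R M) :=
    { complex := CN, projective := hproj, π := π, quasiIso := hqis }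
  let PO : ProjectiveResolution (ModuleCat.of R M) := ProjectiveResolution.of (ModuleCat.of R M)
  let e : HomotopyEquiv PO.complex CN := ProjectiveResolution.homotopyEquiv PO PR
  let e' := (dualFunctor R).mapHomotopyEquiv e
  let U1 := (((dualFunctor R).mapHomologicalComplex (ComplexShape.down ℕ)).obj PO.complex).unop
  let U2 := (((dualFunctor R).mapHomologicalComplex (ComplexShape.down ℕ)).obj CN).unop
  -- transfer of the vanishing of homology
  have key : ∀ n, extVanish R n M → Subsingleton (U2.homology n) := by
    intro n hvan
    have iso1 := e'.toHomologyIso n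
    have full : U2.homology n ≅ U1.homology n :=
      (HomologicalComplex.homologyUnop _ n) ≪≫ iso1.unop ≪≫
        (HomologicalComplex.homologyUnop _ n).symm
    have : Subsingleton (U1.homology n) := hvan
    exact Equiv.subsingleton (full.toLinearEquiv.toEquiv)
  -- identification of the differentials of `U2`
  have hUd : ∀ j, U2.d j (j+1) = ModuleCat.ofHom (dualMap (d j)) := by
    intro j
    show ModuleCat.ofHom (dualMap (CN.d (j+1) j).hom) = ModuleCat.ofHom (dualMap (d j))
    rw [hCd j]
  have hU0 : ∀ i, U2.d i 0 = 0 := by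
    intro i
    apply U2.shape
    simp [ComplexShape.symm]
  constructor
  · intro hvan
    haveI := key 0 hvan
    have hz : U2.ExactAt 0 := by
      rw [HomologicalComplex.exactAt_iff_isZero_homology]
      exact ModuleCat.isZero_of_subsingleton _
    rw [HomologicalComplex.exactAt_iff' U2 ((ComplexShape.down ℕ).symm.prev 0) 0 1 rfl
      ((ComplexShape.down ℕ).symm.next_eq' (by simp [ComplexShape.symm]))] at hz
    rw [ShortComplex.moduleCat_exact_iff] at hz
    intro a b hab
    have h1 : dualMap (d 0) (a - b) = 0 := by rw [map_sub, hab, sub_self]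
    have h2 : U2.d 0 1 (a - b) = 0 := by rw [hUd 0]; exact h1
    obtain ⟨y, hy⟩ := hz _ h2
    have hy' : U2.d ((ComplexShape.down ℕ).symm.prev 0) 0 y = a - b := hy
    rw [hU0] at hy'
    have : a - b = 0 := by rw [← hy']; rfl
    exact sub_eq_zero.1 this
  · intro i hvan
    haveI := key (i+1) hvan
    have hz : U2.ExactAt (i+1) := by
      rw [HomologicalComplex.exactAt_iff_isZero_homology]
      exact ModuleCat.isZero_of_subsingleton _
    rw [HomologicalComplex.exactAt_iff' U2 i (i+1) (i+2)
      ((ComplexShape.down ℕ).symm.prev_eq' (by simp [ComplexShape.symm]))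
      ((ComplexShape.down ℕ).symm.next_eq' (by simp [ComplexShape.symm]))] at hz
    rw [ShortComplex.moduleCat_exact_iff] at hz
    intro g
    constructor
    · intro hg
      have hg' : U2.d (i+1) (i+2) g = 0 := by rw [hUd (i+1)]; exact hg
      obtain ⟨y, hy⟩ := hz _ hg'
      have hy' : U2.d i (i+1) y = g := hy
      rw [hUd i] at hy'
      exact ⟨y, hy'⟩
    · rintro ⟨y, rfl⟩
      show dualMap (d (i+1)) (dualMap (d i) y) = 0
      refine LinearMap.ext fun x => ?_
      show y (d i (d (i+1) x)) = 0
      rw [(hex i).apply_apply_eq_zero x, map_zero]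

end BridgeA


section Splitting

open CategoryTheory Limits

/-- If the small finitistic dimension is `≤ k` and `Q` is a projective resolution of a
f.g. module `X` vanishing above degree `k+1`, then the last differential is a split
monomorphism. -/
lemma splitting_of_finDim {Λ : Type} [Ring Λ] {k : ℕ} (h : finDimLE Λ k)
    (X : ModuleCat.{0} Λ) (hX : Module.Finite Λ X)
    (Q : ChainComplex (ModuleCat.{0} Λ) ℕ) (hQproj : ∀ i, Projective (Q.X i))
    (hQzero : ∀ i, k + 1 < i → Subsingleton (Q.X i))
    (π : Q ⟶ (ChainComplex.single₀ _).obj X) (hπ : QuasiIso π) :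
    ∃ s : Q.X k ⟶ Q.X (k+1), Q.d (k+1) k ≫ s = 𝟙 (Q.X (k+1)) := by
  have pd1 : projDimLE Λ X (k+1) := ⟨Q, π, hQproj, fun i hi => hQzero i hi, hπ⟩
  obtain ⟨F, πF, hFproj, hFzero, hFqis⟩ := h X hX ⟨k+1, pd1⟩
  let PR1 : ProjectiveResolution X := { complex := Q, projective := hQproj, π := π, quasiIso := hπ }
  let PR2 : ProjectiveResolution X := { complex := F, projective := hFproj, π := πF, quasiIso := hFqis }
  let e : HomotopyEquiv Q F := ProjectiveResolution.homotopyEquiv PR1 PR2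
  have hcomm := (e.homotopyHomInvId).comm (k+1)
  have h1 : (e.hom ≫ e.inv).f (k+1) = 0 := by
    rw [HomologicalComplex.comp_f]
    have hz : IsZero (F.X (k+1)) := by
      haveI := hFzero (k+1) (lt_add_one k)
      exact ModuleCat.isZero_of_subsingleton _
    rw [hz.eq_of_tgt (e.hom.f (k+1)) 0, zero_comp]
  have h2 : prevD (k+1) (e.homotopyHomInvId).hom = 0 := by
    rw [Homotopy.prevD_chainComplex]
    have hz : IsZero (Q.X (k+2)) := by
      haveI := hQzero (k+2) (by omega)
      exact ModuleCat.isZero_of_subsingleton _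
    rw [hz.eq_of_src (Q.d (k+2) (k+1)) 0, comp_zero]
  rw [h1, Homotopy.dNext_succ_chainComplex, h2] at hcomm
  refine ⟨-(e.homotopyHomInvId).hom k (k+1), ?_⟩
  have : Q.d (k+1) k ≫ (e.homotopyHomInvId).hom k (k+1) = -𝟙 (Q.X (k+1)) := by
    have h3 := hcomm.symm
    rw [add_zero] at h3
    have h4 : (𝟙 Q : Q ⟶ Q).f (k+1) = 𝟙 (Q.X (k+1)) := rfl
    rw [h4] at h3
    -- h3 : Q.d (k+1) k ≫ hom k (k+1) + 𝟙 _ = 0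
    rw [← neg_eq_of_add_eq_zero_left h3]
  rw [Preadditive.comp_neg, this, neg_neg]

end Splitting


section DualFin

open MulOpposite

variable (L : Type) [Ring L]

/-- Evaluation of a dual linear map on a free module via coordinate sums. -/
lemma dual_apply_eq_sum {m : ℕ} (g : (Fin m → L) →ₗ[L] L) (x : Fin m → L) :
    g x = ∑ j, x j * g (Pi.single j 1) := by
  have h := LinearMap.pi_apply_eq_sum_univ g x
  simp only [smul_eq_mul] at h
  rw [h]
  refine Finset.sum_congr rfl fun j _ => ?_
  congr 1
  apply congrArg
  funext i
  simp [Pi.single_apply, eq_comm]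

/-- The dual of a finite free right module, identified with a finite free left module. -/
noncomputable def dualFinEquiv (m : ℕ) :
    ((Fin m → Lᵐᵒᵖ) →ₗ[Lᵐᵒᵖ] Lᵐᵒᵖ) ≃+ (Fin m → L) where
  toFun g := fun j => (g (Pi.single j 1)).unop
  invFun v :=
    { toFun := fun x => ∑ j, x j * op (v j)
      map_add' := fun x y => by
        simp [add_mul, Finset.sum_add_distrib]
      map_smul' := fun c x => by
        simp [mul_assoc, Finset.mul_sum, smul_eq_mul] }
  left_inv g := by
    refine LinearMap.ext fun x => ?_
    simp only [LinearMap.coe_mk, AddHom.coe_mk, op_unop]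
    exact (dual_apply_eq_sum Lᵐᵒᵖ g x).symm
  right_inv v := by
    funext j
    simp only [LinearMap.coe_mk, AddHom.coe_mk]
    rw [Finset.sum_eq_single j]
    · simp
    · intro i _ hij
      simp [Pi.single_eq_of_ne hij]
    · simp
  map_add' g h := by
    funext j
    simp

lemma dualFinEquiv_smul {m : ℕ} (a : L) (g : (Fin m → Lᵐᵒᵖ) →ₗ[Lᵐᵒᵖ] Lᵐᵒᵖ) :
    dualFinEquiv L m ((op (op a)) • g) = a • dualFinEquiv L m g := by
  funext j
  show ((op (op a) • g) (Pi.single j 1)).unop = a * (g (Pi.single j 1)).unop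
  rw [LinearMap.smul_apply, MulOpposite.smul_eq_mul_unop]
  simp

lemma dualFinEquiv_symm_smul {m : ℕ} (a : L) (v : Fin m → L) :
    (dualFinEquiv L m).symm (a • v) = (op (op a)) • (dualFinEquiv L m).symm v := by
  apply (dualFinEquiv L m).injective
  rw [AddEquiv.apply_symm_apply, dualFinEquiv_smul, AddEquiv.apply_symm_apply]

/-- Conjugating an `Lᵐᵒᵖᵐᵒᵖ`-linear map between duals of free modules by `dualFinEquiv`
yields an `L`-linear map. -/
noncomputable def conjLinear {m1 m2 : ℕ}
    (δ : ((Fin m1 → Lᵐᵒᵖ) →ₗ[Lᵐᵒᵖ] Lᵐᵒᵖ) →ₗ[Lᵐᵒᵖᵐᵒᵖ] ((Fin m2 → Lᵐᵒᵖ) →ₗ[Lᵐᵒᵖ] Lᵐᵒᵖ)) :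
    (Fin m1 → L) →ₗ[L] (Fin m2 → L) where
  toFun v := dualFinEquiv L m2 (δ ((dualFinEquiv L m1).symm v))
  map_add' x y := by simp
  map_smul' a v := by
    simp only [RingHom.id_apply]
    rw [dualFinEquiv_symm_smul, map_smul, dualFinEquiv_smul]

/-- Cast between free modules along an equality of ranks. -/
def pcast {a b : ℕ} (h : a = b) : (Fin a → L) →ₗ[L] (Fin b → L) where
  toFun v := fun j => v (Fin.cast h.symm j)
  map_add' x y := rfl
  map_smul' c x := rfl

lemma pcast_pcast {a b c : ℕ} (h1 : a = b) (h2 : b = c) (v : Fin a → L) :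
    pcast L h2 (pcast L h1 v) = pcast L (h1.trans h2) v := rfl

lemma pcast_id {a : ℕ} (h : a = a) (v : Fin a → L) : pcast L h v = v := rfl

lemma pcast_bijective {a b : ℕ} (h : a = b) : Function.Bijective (pcast L h) := by
  subst h
  exact Function.bijective_id

end DualFin

set_option maxHeartbeats 2000000 in
/-- If `l.fin.dim Λ ≤ k`, then every finitely generated right `Λ`-module `N`
with `grade N ≥ k + 1` is zero. -/
theorem vanish_of_findim_le (Λ : Type) [Ring Λ] [IsNoetherianRing Λ] [IsNoetherianRing Λᵐᵒᵖ]
    (k : ℕ) (h : finDimLE Λ k) :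
    ∀ N : ModuleCat.{0} Λᵐᵒᵖ, Module.Finite Λᵐᵒᵖ N → gradeGE Λᵐᵒᵖ N (k + 1) →
      Subsingleton N := by
  classical
  intro N hfin hgrade
  haveI := hfin
  obtain ⟨m, d, p, hsurj, hex0, hex⟩ := exists_fres Λᵐᵒᵖ N
  obtain ⟨hinj, hexd⟩ := dual_exactness Λᵐᵒᵖ N m d p hsurj hex0 hex
  have hinj0 : Function.Injective ⇑(dualMap (d 0)) := hinj (hgrade 0 (by omega))
  have hexd' : ∀ i, i < k → Function.Exact ⇑(dualMap (d i)) ⇑(dualMap (d (i+1))) :=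
    fun i hi => hexd i (hgrade (i+1) (by omega))
  -- transport the dual complex to左 `Λ`-modules
  let δ : ∀ j, (Fin (m j) → Λ) →ₗ[Λ] (Fin (m (j+1)) → Λ) :=
    fun j => conjLinear Λ (dualMap (d j))
  have hδ_fun : ∀ j (v : Fin (m j) → Λ),
      δ j v = dualFinEquiv Λ (m (j+1)) (dualMap (d j) ((dualFinEquiv Λ (m j)).symm v)) :=
    fun j v => rfl
  have hδinj : Function.Injective ⇑(δ 0) := by
    intro a b hab
    apply (dualFinEquiv Λ (m 0)).symm.injective.eq_iff.1
    apply hinj0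
    apply (dualFinEquiv Λ (m 1)).injective
    exact hab
  have hδex : ∀ i, i < k → Function.Exact ⇑(δ i) ⇑(δ (i+1)) := by
    intro i hi
    have := exact_conj ⇑(dualMap (d i)) ⇑(dualMap (d (i+1))) (hexd' i hi)
      ⇑(dualFinEquiv Λ (m i)).symm ((dualFinEquiv Λ (m i)).symm.surjective)
      (dualFinEquiv Λ (m (i+1))).toEquiv ⇑(dualFinEquiv Λ (m (i+2)))
      (fun c => by
        constructor
        · intro hc
          apply (dualFinEquiv Λ (m (i+2))).injective
          simpa using hc
        · intro hc; rw [hc]; exact map_zero _)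
    exact this
  -- the quotient module `X`
  set X := ((Fin (m (k+1)) → Λ) ⧸ LinearMap.range (δ k)) with hXdef
  let q : (Fin (m (k+1)) → Λ) →ₗ[Λ] X := (LinearMap.range (δ k)).mkQ
  -- the reversed, truncated complex
  let n' : ℕ → ℕ := fun i => if i ≤ k+1 then m (k+1-i) else 0
  have e1 : ∀ i, i ≤ k → n' (i+1) = m (k-i) := by
    intro i h
    show (if i+1 ≤ k+1 then m (k+1-(i+1)) else 0) = m (k-i)
    rw [if_pos (by omega)]
    congr 1
    omega
  have e2 : ∀ i, i ≤ k → m (k-i+1) = n' i := by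
    intro i h
    show m (k-i+1) = (if i ≤ k+1 then m (k+1-i) else 0)
    rw [if_pos (by omega)]
    congr 1
    omega
  let dd : ∀ i, (Fin (n' (i+1)) → Λ) →ₗ[Λ] (Fin (n' i) → Λ) := fun i =>
    if h : i ≤ k then (pcast Λ (e2 i h)) ∘ₗ (δ (k-i)) ∘ₗ (pcast Λ (e1 i h)) else 0
  have dd_eq : ∀ i (h : i ≤ k) (j : ℕ) (hj : k - i = j)
      (ha : n' (i+1) = m j) (hb : m (j+1) = n' i),
      dd i = (pcast Λ hb) ∘ₗ (δ j) ∘ₗ (pcast Λ ha) := by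
    intro i h j hj ha hb
    subst hj
    show (if h' : i ≤ k then (pcast Λ (e2 i h')) ∘ₗ (δ (k-i)) ∘ₗ (pcast Λ (e1 i h')) else 0) = _
    rw [dif_pos h]
  have dd_eq0 : ∀ i, ¬ (i ≤ k) → dd i = 0 := by
    intro i h
    show (if h' : i ≤ k then (pcast Λ (e2 i h')) ∘ₗ (δ (k-i)) ∘ₗ (pcast Λ (e1 i h')) else 0) = 0
    rw [dif_neg h]
  have hn'zero : ∀ i, k+1 < i → n' i = 0 := by
    intro i h
    show (if i ≤ k+1 then m (k+1-i) else 0) = 0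
    rw [if_neg (by omega)]
  have sq : ∀ i, (ModuleCat.ofHom (dd (i+1))) ≫ (ModuleCat.ofHom (dd i)) = 0 := by
    intro i
    by_cases hi1 : i + 1 ≤ k
    · have hle : i ≤ k := by omega
      have ha' : n' (i+1) = m (k-(i+1)+1) := (e1 i hle).trans (congrArg m (by omega))
      have hb' : m ((k-(i+1)+1)+1) = n' i := (congrArg m (by omega)).trans (e2 i hle)
      rw [dd_eq (i+1) hi1 (k-(i+1)) rfl (e1 (i+1) hi1) (e2 (i+1) hi1),
        dd_eq i hle (k-(i+1)+1) (by omega) ha' hb']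
      refine ModuleCat.hom_ext (LinearMap.ext fun v => ?_)
      show (pcast Λ hb') ((δ (k-(i+1)+1)) ((pcast Λ ha')
        ((pcast Λ (e2 (i+1) hi1)) ((δ (k-(i+1))) ((pcast Λ (e1 (i+1) hi1)) v))))) = 0
      rw [pcast_pcast, pcast_id]
      rw [(hδex (k-(i+1)) (by omega)).apply_apply_eq_zero, map_zero]
    · rw [dd_eq0 (i+1) hi1]
      refine ModuleCat.hom_ext (LinearMap.ext fun v => ?_)
      show (dd i) ((0 : _ →ₗ[Λ] _) v) = 0
      rw [LinearMap.zero_apply, map_zero]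
  let QX : ChainComplex (ModuleCat.{0} Λ) ℕ :=
    ChainComplex.of (fun i => ModuleCat.of Λ (Fin (n' i) → Λ)) (fun i => ModuleCat.ofHom (dd i)) sq
  have hQd : ∀ j, QX.d (j+1) j = ModuleCat.ofHom (dd j) := fun j =>
    ChainComplex.of_d (fun i => ModuleCat.of Λ (Fin (n' i) → Λ)) (fun i => ModuleCat.ofHom (dd i)) j
  have h0' : n' 0 = m (k+1) := by
    show (if 0 ≤ k+1 then m (k+1-0) else 0) = m (k+1)
    rw [if_pos (by omega)]
    rfl
  let φX : QX.X 0 ⟶ ModuleCat.of Λ X := ModuleCat.ofHom (q ∘ₗ pcast Λ h0')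
  have ha0 : n' (0+1) = m k := (e1 0 (by omega)).trans (congrArg m (by omega))
  have hb0 : m (k+1) = n' 0 := (congrArg m (by omega)).trans (e2 0 (by omega))
  have dd0 : dd 0 = (pcast Λ hb0) ∘ₗ (δ k) ∘ₗ (pcast Λ ha0) :=
    dd_eq 0 (by omega) k (by omega) ha0 hb0
  have hwX : QX.d 1 0 ≫ φX = 0 := by
    rw [hQd 0, dd0]
    refine ModuleCat.hom_ext (LinearMap.ext fun v => ?_)
    show q ((pcast Λ h0') ((pcast Λ hb0) ((δ k) ((pcast Λ ha0) v)))) = 0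
    rw [pcast_pcast, pcast_id]
    exact (Submodule.Quotient.mk_eq_zero _).2 ⟨(pcast Λ ha0) v, rfl⟩
  let πX : QX ⟶ (ChainComplex.single₀ _).obj (ModuleCat.of Λ X) :=
    (ChainComplex.toSingle₀Equiv _ _).symm ⟨φX, hwX⟩
  haveI hqisX : QuasiIso πX := by
    apply quasiIso_to_single₀
    · intro z
      obtain ⟨w, hw⟩ := Submodule.mkQ_surjective _ z
      exact ⟨pcast Λ h0'.symm w, by
        show q (pcast Λ h0' (pcast Λ h0'.symm w)) = z
        rw [pcast_pcast, pcast_id]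
        exact hw⟩
    · intro x hx
      have hx' : (pcast Λ h0') x ∈ LinearMap.range (δ k) := by
        rw [← Submodule.Quotient.mk_eq_zero]
        exact hx
      obtain ⟨u, hu⟩ := hx'
      refine ⟨pcast Λ ha0.symm u, ?_⟩
      rw [hQd 0, dd0]
      show (pcast Λ hb0) ((δ k) ((pcast Λ ha0) ((pcast Λ ha0.symm) u))) = x
      rw [pcast_pcast, pcast_id, hu, pcast_pcast]
      have := pcast_id Λ ((h0'.trans hb0 : n' 0 = n' 0)) x
      calc pcast Λ (h0'.trans hb0) ((pcast Λ (hb0.symm.trans h0'.symm)) x)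
          = pcast Λ ((hb0.symm.trans h0'.symm).trans (h0'.trans hb0)) x := by
            rw [pcast_pcast]
        _ = x := pcast_id Λ _ x
    · intro n
      rw [hQd (n+1), hQd n]
      by_cases hn1 : n + 1 ≤ k
      · have hle : n ≤ k := by omega
        have ha' : n' (n+1) = m (k-(n+1)+1) := (e1 n hle).trans (congrArg m (by omega))
        have hb' : m ((k-(n+1)+1)+1) = n' n := (congrArg m (by omega)).trans (e2 n hle)
        rw [dd_eq (n+1) hn1 (k-(n+1)) rfl (e1 (n+1) hn1) (e2 (n+1) hn1),
          dd_eq n hle (k-(n+1)+1) (by omega) ha' hb']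
        have base := hδex (k-(n+1)) (by omega)
        let βE : (Fin (m (k-(n+1)+1)) → Λ) ≃ (Fin (n' (n+1)) → Λ) :=
          { toFun := pcast Λ (e2 (n+1) hn1)
            invFun := pcast Λ (e2 (n+1) hn1).symm
            left_inv := fun v => by rw [pcast_pcast]; exact pcast_id Λ _ v
            right_inv := fun v => by rw [pcast_pcast]; exact pcast_id Λ _ v }
        have hc := exact_conj ⇑(δ (k-(n+1))) ⇑(δ (k-(n+1)+1)) base
          ⇑(pcast Λ (e1 (n+1) hn1)) (pcast_bijective Λ _).2 βE ⇑(pcast Λ hb')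
          (fun c => ⟨fun hc => (pcast_bijective Λ hb').1 (by rw [hc, map_zero]),
            fun hc => by rw [hc, map_zero]⟩)
        exact hc
      · by_cases hn0 : n ≤ k
        · -- n = k : injectivity spot
          rw [dd_eq0 (n+1) hn1]
          have haN : n' (n+1) = m 0 := (e1 n hn0).trans (congrArg m (by omega))
          have hbN : m 1 = n' n := (congrArg m (by omega)).trans (e2 n hn0)
          have hddn : dd n = (pcast Λ hbN) ∘ₗ (δ 0) ∘ₗ (pcast Λ haN) :=
            dd_eq n hn0 0 (by omega) haN hbN
          intro y
          constructor
          · intro hy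
            have hy' : (pcast Λ hbN) ((δ 0) ((pcast Λ haN) y)) = 0 := by
              rw [hddn] at hy
              exact hy
            have h1 : (δ 0) ((pcast Λ haN) y) = 0 := by
              apply (pcast_bijective Λ hbN).1
              rw [hy', map_zero]
            have h2 : (pcast Λ haN) y = 0 := by
              apply hδinj
              rw [h1, map_zero]
            have h3 : y = 0 := by
              apply (pcast_bijective Λ haN).1
              rw [h2, map_zero]
            exact ⟨0, by rw [h3]; exact map_zero _⟩
          · rintro ⟨a, rfl⟩
            show (dd n) ((0 : _ →ₗ[Λ] _) a) = 0
            rw [LinearMap.zero_apply, map_zero]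
        · -- n > k : everything is zero
          rw [dd_eq0 (n+1) hn1, dd_eq0 n hn0]
          haveI : Subsingleton ((QX.X (n+1) : Type)) := by
            show Subsingleton (Fin (n' (n+1)) → Λ)
            rw [hn'zero (n+1) (by omega)]
            infer_instance
          intro y
          constructor
          · intro _
            exact ⟨0, Subsingleton.elim _ _⟩
          · intro _
            rfl
  haveI hQproj : ∀ i, CategoryTheory.Projective (QX.X i) :=
    fun i => ModuleCat.projective_of_free (Pi.basisFun Λ (Fin (n' i)))
  have hQzero : ∀ i, k + 1 < i → Subsingleton (QX.X i) := by
    intro i hi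
    show Subsingleton (Fin (n' i) → Λ)
    rw [hn'zero i hi]
    infer_instance
  haveI hXfin : Module.Finite Λ (ModuleCat.of Λ X) := by
    show Module.Finite Λ X
    infer_instance
  obtain ⟨s, hs⟩ := splitting_of_finDim h (ModuleCat.of Λ X) hXfin QX hQproj hQzero πX hqisX
  -- extract the splitting of `δ 0`
  have haK : n' (k+1) = m 0 := (e1 k le_rfl).trans (congrArg m (by omega))
  have hbK : m 1 = n' k := (congrArg m (by omega)).trans (e2 k le_rfl)
  have hddk : dd k = (pcast Λ hbK) ∘ₗ (δ 0) ∘ₗ (pcast Λ haK) :=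
    dd_eq k le_rfl 0 (by omega) haK hbK
  have hsplit : ∀ v : Fin (n' (k+1)) → Λ,
      s ((pcast Λ hbK) ((δ 0) ((pcast Λ haK) v))) = v := by
    intro v
    have := congrArg (fun (f : QX.X (k+1) ⟶ QX.X (k+1)) => f v) hs
    simp only at this
    rw [hQd k, hddk] at this
    exact this
  have hsΛ : ∀ w : Fin (m 0) → Λ,
      (pcast Λ haK) (s ((pcast Λ hbK) ((δ 0) w))) = w := by
    intro w
    have hv := hsplit ((pcast Λ haK.symm) w)
    have hw : (pcast Λ haK) ((pcast Λ haK.symm) w) = w := by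
      rw [pcast_pcast]; exact pcast_id Λ _ w
    rw [hw] at hv
    rw [hv]
    exact hw
  -- transport the splitting back to the `Λᵐᵒᵖ` side
  let s₀ : ((Fin (m 1) → Λᵐᵒᵖ) →ₗ[Λᵐᵒᵖ] Λᵐᵒᵖ) →+ ((Fin (m 0) → Λᵐᵒᵖ) →ₗ[Λᵐᵒᵖ] Λᵐᵒᵖ) :=
    ((dualFinEquiv Λ (m 0)).symm.toAddMonoidHom).comp
      ((AddMonoidHom.mk' (fun w => (pcast Λ haK) (s ((pcast Λ hbK) w))) (fun a b => by
          simp [map_add])).comp (dualFinEquiv Λ (m 1)).toAddMonoidHom)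
  have hs₀ : ∀ g : (Fin (m 0) → Λᵐᵒᵖ) →ₗ[Λᵐᵒᵖ] Λᵐᵒᵖ, s₀ (dualMap (d 0) g) = g := by
    intro g
    show (dualFinEquiv Λ (m 0)).symm
      ((pcast Λ haK) (s ((pcast Λ hbK) (dualFinEquiv Λ (m 1) (dualMap (d 0) g))))) = g
    have : dualFinEquiv Λ (m 1) (dualMap (d 0) g) = (δ 0) (dualFinEquiv Λ (m 0) g) := by
      rw [hδ_fun]
      rw [AddEquiv.symm_apply_apply]
    rw [this, hsΛ]
    exact (dualFinEquiv Λ (m 0)).symm_apply_apply g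
  have hs₀smul : ∀ (a : Λ) (g : (Fin (m 1) → Λᵐᵒᵖ) →ₗ[Λᵐᵒᵖ] Λᵐᵒᵖ),
      s₀ ((MulOpposite.op (MulOpposite.op a)) • g) = (MulOpposite.op (MulOpposite.op a)) • s₀ g := by
    intro a g
    show (dualFinEquiv Λ (m 0)).symm
      ((pcast Λ haK) (s ((pcast Λ hbK) (dualFinEquiv Λ (m 1) (MulOpposite.op (MulOpposite.op a) • g))))) = _
    rw [dualFinEquiv_smul]
    have hlin : (pcast Λ haK) (s ((pcast Λ hbK) (a • dualFinEquiv Λ (m 1) g))) =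
        a • (pcast Λ haK) (s ((pcast Λ hbK) (dualFinEquiv Λ (m 1) g))) := by
      rw [map_smul, map_smul, map_smul]
    rw [hlin, dualFinEquiv_symm_smul]
    rfl
  -- surjectivity of `d 0`
  have hd0surj : Function.Surjective ⇑(d 0) := by
    intro y
    let x : Fin (m 1) → Λᵐᵒᵖ := fun j => (s₀ (LinearMap.proj j)) y
    have hgen : ∀ g : (Fin (m 1) → Λᵐᵒᵖ) →ₗ[Λᵐᵒᵖ] Λᵐᵒᵖ, g x = (s₀ g) y := by
      intro g
      have hgsum : g = ∑ j, (MulOpposite.op (g (Pi.single j 1))) • (LinearMap.proj j :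
          (Fin (m 1) → Λᵐᵒᵖ) →ₗ[Λᵐᵒᵖ] Λᵐᵒᵖ) := by
        refine LinearMap.ext fun z => ?_
        rw [dual_apply_eq_sum Λᵐᵒᵖ g z]
        rw [LinearMap.sum_apply]
        refine Finset.sum_congr rfl fun j _ => ?_
        rw [LinearMap.smul_apply, MulOpposite.smul_eq_mul_unop]
        simp [LinearMap.proj_apply]
      calc g x = ∑ j, x j * g (Pi.single j 1) := dual_apply_eq_sum Λᵐᵒᵖ g x
        _ = ∑ j, ((s₀ (LinearMap.proj j)) y) * g (Pi.single j 1) := rfl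
        _ = ∑ j, ((MulOpposite.op (g (Pi.single j 1))) • (s₀ (LinearMap.proj j))) y := by
            refine Finset.sum_congr rfl fun j _ => ?_
            rw [LinearMap.smul_apply, MulOpposite.smul_eq_mul_unop]
            rfl
        _ = ∑ j, (s₀ ((MulOpposite.op (g (Pi.single j 1))) • (LinearMap.proj j))) y := by
            refine Finset.sum_congr rfl fun j _ => ?_
            congr 1
            have := hs₀smul ((g (Pi.single j 1)).unop) (LinearMap.proj j)
            simpa using this.symm
        _ = (s₀ (∑ j, (MulOpposite.op (g (Pi.single j 1))) • (LinearMap.proj j :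
              (Fin (m 1) → Λᵐᵒᵖ) →ₗ[Λᵐᵒᵖ] Λᵐᵒᵖ))) y := by
            rw [map_sum, LinearMap.sum_apply]
        _ = (s₀ g) y := by rw [← hgsum]
    refine ⟨x, ?_⟩
    have hcoord : ∀ g : (Fin (m 0) → Λᵐᵒᵖ) →ₗ[Λᵐᵒᵖ] Λᵐᵒᵖ, g (d 0 x) = g y := by
      intro g
      have h1 : g (d 0 x) = (dualMap (d 0) g) x := rfl
      rw [h1, hgen (dualMap (d 0) g), hs₀ g]
    funext j
    have := hcoord (LinearMap.proj j)
    simpa [LinearMap.proj_apply] using this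
  -- conclude that `N` is trivial
  have hzero : ∀ z : (Fin (m 0) → Λᵐᵒᵖ), p z = 0 := by
    intro z
    obtain ⟨x, rfl⟩ := hd0surj z
    exact hex0.apply_apply_eq_zero x
  constructor
  intro a b
  obtain ⟨za, hza⟩ := hsurj a
  obtain ⟨zb, hzb⟩ := hsurj b
  rw [← hza, ← hzb, hzero za, hzero zb]
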